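/- arXiv:cond-mat/0407087 — 3 statements merged into one kernel-verified Lean document; each statement's English description precedes it below -/
import Mathlib

section
/- Let M be an n×n real matrix whose entries are such that all matchings of distinct sizes have distinct weights (generic weights). For 1 ≤ k ≤ n-1, let t_k denote the minimum total weight over all matchings (sets of entries no two of which share a row or column) of size k in M. Then for all 2 ≤ k ≤ n-1, t_{k+1} + t_{k-1} ≥ 2·t_k, i.e., the sequence of increments t_{k+1} - t_k is nondecreasing in k. -/
/-
Take minimum-weight matchings `A` of size `k + 1` and `B` of size `k - 1`, and join a cell of `A`
to a cell of `B` when they share a row or a column. Since `A` is a matching, every cell of `B` has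
at most two neighbours, so a connected component with `a` cells of `A` and `b` cells of `B` has at
most `2 b` edges; being connected it has at least `a + b - 1`, whence `a ≤ b + 1`. As `#A > #B`,
some component has `a = b + 1`. Exchanging the cells of `A` and `B` inside that component gives
two matchings of size `k` whose weights add up to `w A + w B`, so `2 t k ≤ t (k + 1) + t (k - 1)`.
-/

open Finset

/-- A matching in an `n × n` matrix: a set of cells no two of which share a row or a column. -/
def Matrix.IsCellMatching {n : ℕ} (S : Finset (Fin n × Fin n)) : Prop :=
  ∀ p ∈ S, ∀ q ∈ S, p ≠ q → p.1 ≠ q.1 ∧ p.2 ≠ q.2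

/-- The weight of a set of cells of the matrix `M`. -/
def Matrix.cellWeight {n : ℕ} (M : Fin n → Fin n → ℝ) (S : Finset (Fin n × Fin n)) : ℝ :=
  ∑ p ∈ S, M p.1 p.2

namespace SimpleGraph

variable {V : Type*} {G : SimpleGraph V}

theorem Connected.card_le_card_add_one_of_isBipartiteWith [Fintype V] [DecidableRel G.Adj]
    (hG : G.Connected) {s t : Finset V} (hst : G.IsBipartiteWith s t)
    (ht : ∀ v ∈ t, G.degree v ≤ 2) : #s ≤ #t + 1 := by
  classical
  have hedges : #G.edgeFinset ≤ 2 * #t := by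
    rw [← isBipartiteWith_sum_degrees_eq_card_edges' hst, mul_comm]
    exact sum_le_card_nsmul _ _ _ ht
  have hconn := hG.card_vert_le_card_edgeSet_add_one
  rw [Nat.card_eq_fintype_card, Nat.card_eq_fintype_card, ← edgeFinset_card] at hconn
  have hparts : #s + #t ≤ Fintype.card V := by
    rw [← card_union_of_disjoint (disjoint_coe.1 hst.disjoint)]
    exact card_le_univ _
  omega

theorem ConnectedComponent.card_le_card_add_one_of_isBipartiteWith [Fintype V] [DecidableEq V]
    [DecidableRel G.Adj] {s t : Finset V}
    (hst : G.IsBipartiteWith s t) (ht : ∀ v ∈ t, G.degree v ≤ 2) (c : G.ConnectedComponent) :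
    #{v ∈ s | v ∈ c.supp} ≤ #{v ∈ t | v ∈ c.supp} + 1 := by
  have hc : (G.induce c.supp).Connected := c.connected_toSimpleGraph
  rw [← card_subtype, ← card_subtype]
  refine hc.card_le_card_add_one_of_isBipartiteWith
    ⟨Set.disjoint_left.2 fun v hvs hvt => Set.disjoint_left.1 hst.disjoint
      (mem_subtype.1 hvs) (mem_subtype.1 hvt), fun v w hvw => by simpa using hst.mem_of_adj hvw⟩
    fun v hv => ((Embedding.induce _).toCopy.degree_le v).trans (ht v (mem_subtype.1 hv))

end SimpleGraph

namespace Matrix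

variable {n : ℕ}

def SharesLine (p q : Fin n × Fin n) : Prop := p.1 = q.1 ∨ p.2 = q.2

instance : DecidableRel (SharesLine (n := n)) := fun _ _ => inferInstanceAs (Decidable (_ ∨ _))

theorem SharesLine.refl (p : Fin n × Fin n) : SharesLine p p := Or.inl rfl

theorem SharesLine.symm {p q : Fin n × Fin n} (h : SharesLine p q) : SharesLine q p :=
  h.imp Eq.symm Eq.symm

theorem isCellMatching_iff_sharesLine {S : Finset (Fin n × Fin n)} :
    IsCellMatching S ↔ ∀ p ∈ S, ∀ q ∈ S, SharesLine p q → p = q := by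
  simp only [IsCellMatching, SharesLine]
  grind

theorem IsCellMatching.eq_of_sharesLine {S : Finset (Fin n × Fin n)} (hS : IsCellMatching S)
    {p q : Fin n × Fin n} (hp : p ∈ S) (hq : q ∈ S) (h : SharesLine p q) : p = q :=
  isCellMatching_iff_sharesLine.1 hS p hp q hq h

theorem IsCellMatching.card_filter_sharesLine_le_two {S : Finset (Fin n × Fin n)}
    (hS : IsCellMatching S) (q : Fin n × Fin n) :
    #{p ∈ S | SharesLine p q} ≤ 2 := by
  have hrow : #{p ∈ S | p.1 = q.1} ≤ 1 := card_le_one.2 fun a ha b hb => by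
    simp only [mem_filter] at ha hb
    exact hS.eq_of_sharesLine ha.1 hb.1 (Or.inl (ha.2.trans hb.2.symm))
  have hcol : #{p ∈ S | p.2 = q.2} ≤ 1 := card_le_one.2 fun a ha b hb => by
    simp only [mem_filter] at ha hb
    exact hS.eq_of_sharesLine ha.1 hb.1 (Or.inr (ha.2.trans hb.2.symm))
  calc #{p ∈ S | SharesLine p q} = #({p ∈ S | p.1 = q.1} ∪ {p ∈ S | p.2 = q.2}) := by
        rw [← filter_or]; rfl
    _ ≤ 2 := (card_union_le _ _).trans (by omega)

/-- The cells of `A` are the left vertices and those of `B` the right vertices, so a cell of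
`A ∩ B` occurs twice, as two adjacent vertices. -/
def conflictGraph (A B : Finset (Fin n × Fin n)) :
    SimpleGraph ((Fin n × Fin n) ⊕ (Fin n × Fin n)) where
  Adj
    | .inl p, .inr q | .inr q, .inl p => p ∈ A ∧ q ∈ B ∧ SharesLine p q
    | _, _ => False
  symm := ⟨by rintro (_ | _) (_ | _) <;> simp⟩
  loopless := ⟨by rintro (_ | _) <;> simp⟩

theorem conflictGraph_isBipartiteWith (A B : Finset (Fin n × Fin n)) :
    (conflictGraph A B).IsBipartiteWith (A.map .inl : Finset (_ ⊕ (Fin n × Fin n)))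
      (B.map .inr : Finset ((Fin n × Fin n) ⊕ _)) := by
  refine ⟨?_, ?_⟩
  · simp [Set.disjoint_left]
  · rintro (p | p) (q | q) h <;> simp_all [conflictGraph]

theorem IsCellMatching.degree_conflictGraph_inr_le_two {A : Finset (Fin n × Fin n)}
    (hA : IsCellMatching A) (B : Finset (Fin n × Fin n)) (q : Fin n × Fin n)
    [Fintype ((conflictGraph A B).neighborSet (.inr q))] :
    (conflictGraph A B).degree (.inr q) ≤ 2 := by
  rw [← SimpleGraph.card_neighborFinset_eq_degree]
  calc _ ≤ #({p ∈ A | SharesLine p q}.map .inl) := by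
        refine card_le_card fun v hv => ?_
        rw [SimpleGraph.mem_neighborFinset] at hv
        rcases v with p | p
        · simpa [conflictGraph, hv.1] using hv.2.2
        · exact hv.elim
    _ ≤ 2 := (card_map _).trans_le (hA.card_filter_sharesLine_le_two q)

theorem IsCellMatching.exists_augmenting_component {A B : Finset (Fin n × Fin n)}
    (hA : IsCellMatching A) (hAB : #B < #A) :
    ∃ A₀ ⊆ A, ∃ B₀ ⊆ B, #A₀ = #B₀ + 1 ∧
      ∀ p ∈ A, ∀ q ∈ B, SharesLine p q → (p ∈ A₀ ↔ q ∈ B₀) := by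
  classical
  let G := conflictGraph A B
  have hbound (c : G.ConnectedComponent) :
      #{p ∈ A | .inl p ∈ c.supp} ≤ #{q ∈ B | .inr q ∈ c.supp} + 1 := by
    have := c.card_le_card_add_one_of_isBipartiteWith (conflictGraph_isBipartiteWith A B)
      fun v hv => by
        obtain ⟨q, -, rfl⟩ := mem_map.1 hv
        exact hA.degree_conflictGraph_inr_le_two B q
    simpa [filter_map] using this
  have hsum : ∑ c : G.ConnectedComponent, #{q ∈ B | .inr q ∈ c.supp} <
      ∑ c : G.ConnectedComponent, #{p ∈ A | .inl p ∈ c.supp} := by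
    have hA' := card_eq_sum_card_fiberwise (s := A) (t := univ)
      (f := fun p => G.connectedComponentMk (.inl p)) fun _ _ => mem_univ _
    have hB' := card_eq_sum_card_fiberwise (s := B) (t := univ)
      (f := fun q => G.connectedComponentMk (.inr q)) fun _ _ => mem_univ _
    rw [hA', hB'] at hAB
    convert hAB using 4 <;> simp
  obtain ⟨c, -, hc⟩ := exists_lt_of_sum_lt hsum
  refine ⟨{p ∈ A | .inl p ∈ c.supp}, filter_subset _ A, {q ∈ B | .inr q ∈ c.supp},
    filter_subset _ B, by have := hbound c; omega, ?_⟩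
  intro p hp q hq hpq
  simp only [mem_filter, hp, hq, true_and]
  exact c.mem_supp_congr_adj (show G.Adj (.inl p) (.inr q) from ⟨hp, hq, hpq⟩)

section Exchange

variable {A B A₀ B₀ : Finset (Fin n × Fin n)}

theorem disjoint_sdiff_of_forall_sharesLine
    (hcompat : ∀ p ∈ A, ∀ q ∈ B, SharesLine p q → (p ∈ A₀ ↔ q ∈ B₀)) (hB₀ : B₀ ⊆ B) :
    Disjoint (A \ A₀) B₀ :=
  disjoint_left.2 fun p hp hpB₀ =>
    (mem_sdiff.1 hp).2 ((hcompat p (mem_sdiff.1 hp).1 p (hB₀ hpB₀) (.refl p)).2 hpB₀)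

theorem IsCellMatching.sdiff_union (hA : IsCellMatching A) (hB : IsCellMatching B)
    (hcompat : ∀ p ∈ A, ∀ q ∈ B, SharesLine p q → (p ∈ A₀ ↔ q ∈ B₀)) (hB₀ : B₀ ⊆ B) :
    IsCellMatching (A \ A₀ ∪ B₀) := by
  have cross : ∀ p ∈ A \ A₀, ∀ q ∈ B₀, ¬ SharesLine p q := fun p hp q hq hpq =>
    (mem_sdiff.1 hp).2 ((hcompat p (mem_sdiff.1 hp).1 q (hB₀ hq) hpq).2 hq)
  rw [isCellMatching_iff_sharesLine]
  intro p hp q hq hpq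
  rcases mem_union.1 hp with hp | hp <;> rcases mem_union.1 hq with hq | hq
  · exact hA.eq_of_sharesLine (mem_sdiff.1 hp).1 (mem_sdiff.1 hq).1 hpq
  · exact (cross p hp q hq hpq).elim
  · exact (cross q hq p hp hpq.symm).elim
  · exact hB.eq_of_sharesLine (hB₀ hp) (hB₀ hq) hpq

theorem card_sdiff_union_add
    (hcompat : ∀ p ∈ A, ∀ q ∈ B, SharesLine p q → (p ∈ A₀ ↔ q ∈ B₀))
    (hA₀ : A₀ ⊆ A) (hB₀ : B₀ ⊆ B) : #(A \ A₀ ∪ B₀) + #A₀ = #A + #B₀ := by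
  rw [card_union_of_disjoint (disjoint_sdiff_of_forall_sharesLine hcompat hB₀),
    card_sdiff_of_subset hA₀]
  have := card_le_card hA₀
  omega

theorem cellWeight_sdiff_union_add (M : Fin n → Fin n → ℝ)
    (hcompat : ∀ p ∈ A, ∀ q ∈ B, SharesLine p q → (p ∈ A₀ ↔ q ∈ B₀))
    (hA₀ : A₀ ⊆ A) (hB₀ : B₀ ⊆ B) :
    cellWeight M (A \ A₀ ∪ B₀) + cellWeight M A₀ = cellWeight M A + cellWeight M B₀ := by
  simp only [cellWeight]
  rw [sum_union (disjoint_sdiff_of_forall_sharesLine hcompat hB₀), add_right_comm, sum_sdiff hA₀]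

end Exchange

theorem IsCellMatching.exists_exchange (M : Fin n → Fin n → ℝ) {A B : Finset (Fin n × Fin n)}
    (hA : IsCellMatching A) (hB : IsCellMatching B) (hAB : #B < #A) :
    ∃ A' B', IsCellMatching A' ∧ IsCellMatching B' ∧ #A' + 1 = #A ∧ #B' = #B + 1 ∧
      cellWeight M A' + cellWeight M B' = cellWeight M A + cellWeight M B := by
  obtain ⟨A₀, hA₀, B₀, hB₀, hcard, hcompat⟩ := hA.exists_augmenting_component hAB
  have hcompat' : ∀ q ∈ B, ∀ p ∈ A, SharesLine q p → (q ∈ B₀ ↔ p ∈ A₀) :=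
    fun q hq p hp h => (hcompat p hp q hq h.symm).symm
  refine ⟨A \ A₀ ∪ B₀, B \ B₀ ∪ A₀, hA.sdiff_union hB hcompat hB₀,
    hB.sdiff_union hA hcompat' hA₀, ?_, ?_, ?_⟩
  · have := card_sdiff_union_add hcompat hA₀ hB₀
    omega
  · have := card_sdiff_union_add hcompat' hB₀ hA₀
    omega
  · have := cellWeight_sdiff_union_add M hcompat hA₀ hB₀
    have := cellWeight_sdiff_union_add M hcompat' hB₀ hA₀
    linarith

end Matrix

theorem min_matching_weight_convex_general (n : ℕ) (M : Fin n → Fin n → ℝ)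
    (t : ℕ → ℝ)
    (ht : ∀ k, 1 ≤ k → k ≤ n →
      IsLeast {x : ℝ | ∃ S : Finset (Fin n × Fin n),
        Matrix.IsCellMatching S ∧ S.card = k ∧ Matrix.cellWeight M S = x} (t k)) :
    ∀ k, 2 ≤ k → k ≤ n - 1 → t (k + 1) + t (k - 1) ≥ 2 * t k := by
  intro k hk hkn
  obtain ⟨⟨A, hA, hAcard, hAweight⟩, -⟩ := ht (k + 1) (by omega) (by omega)
  obtain ⟨⟨B, hB, hBcard, hBweight⟩, -⟩ := ht (k - 1) (by omega) (by omega)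
  obtain ⟨A', B', hA', hB', hA'card, hB'card, hweight⟩ := hA.exists_exchange M hB (by omega)
  have hleA' := (ht k (by omega) (by omega)).2 ⟨A', hA', by omega, rfl⟩
  have hleB' := (ht k (by omega) (by omega)).2 ⟨B', hB', by omega, rfl⟩
  linarith

/-- for an `n × n` real matrix with nonnegative, generic entries (matchings of
distinct sizes have distinct weights), the minimum weight `t k` of a size-`k` matching
satisfies `t (k+1) + t (k-1) ≥ 2 * t k` for `2 ≤ k ≤ n - 1`; i.e. the increments
`t (k+1) - t k` are nondecreasing in `k`. -/
theorem min_matching_weight_convex (n : ℕ) (M : Fin n → Fin n → ℝ)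
    (hM : ∀ i j, 0 ≤ M i j)
    (hgen : ∀ S T : Finset (Fin n × Fin n), Matrix.IsCellMatching S → Matrix.IsCellMatching T →
      S.card ≠ T.card → Matrix.cellWeight M S ≠ Matrix.cellWeight M T)
    (t : ℕ → ℝ)
    (ht : ∀ k, 1 ≤ k → k ≤ n →
      IsLeast {x : ℝ | ∃ S : Finset (Fin n × Fin n),
        Matrix.IsCellMatching S ∧ S.card = k ∧ Matrix.cellWeight M S = x} (t k)) :
    ∀ k, 2 ≤ k → k ≤ n - 1 → t (k + 1) + t (k - 1) ≥ 2 * t k :=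
  min_matching_weight_convex_general n M t ht
end

section
/- With the same random variables Δ_i^k as above and μ_i^k = E[Δ_i^k], we have lim_{n→∞} n² · Σ_{k=1}^{n} Σ_{i=1}^{k} (n-k+1)^4 · E[(Δ_i^k − μ_i^k)^4] = 0. -/
/-!
Each `Δ_i^k` has a law `p δ₀ + q Exp(r)`, with `q = 1` for `i = 1` and `q = 1/(n-i+2)` otherwise,
and rate `r = (n-i+1)(n-k+i) ≥ n(n-k+1)`. From `(a-c)⁴ ≤ 8(a⁴+c⁴)` and the moments `q/r` and
`24q/r⁴` of such a law, its fourth central moment is at most `200q/r⁴`, so the `(k,i)` summand is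
at most `200q/n⁴`. Summed over `1 ≤ i ≤ k ≤ n`, the weights `q` add up to at most `2n`: for
`i ≥ 2` the `n-i+1` values of `k` cancel the factor `1/(n-i+2)`. The whole expression is
therefore at most `400/n`.
-/

open MeasureTheory ProbabilityTheory Filter Finset

/-- The law of the mixture variable `Δ_i^k` for `2 ≤ i ≤ k ≤ n`: `0` with probability
`(n-i+1)/(n-i+2)` and exponential with rate `(n-i+1)(n-k+i)` with probability `1/(n-i+2)`. -/
noncomputable def deltaMixtureLaw (n k i : ℕ) : Measure ℝ :=
  ENNReal.ofReal (((n : ℝ) - i + 1) / ((n : ℝ) - i + 2)) • Measure.dirac (0 : ℝ) +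
    ENNReal.ofReal (1 / ((n : ℝ) - i + 2)) •
      expMeasure ((((n : ℝ) - i + 1)) * (((n : ℝ) - k + i)))

open Real
open scoped Nat

section ExponentialMoments

variable {r : ℝ}

lemma integrableOn_pow_mul_exp_neg_mul (m : ℕ) (hr : 0 < r) :
    IntegrableOn (fun x : ℝ => x ^ m * exp (-(r * x))) (Set.Ioi 0) := by
  simpa [Real.rpow_natCast, Real.rpow_one] using integrableOn_rpow_mul_exp_neg_mul_rpow (s := m)
    (p := 1) (by linarith [m.cast_nonneg (α := ℝ)]) one_pos hr

lemma integral_pow_mul_exp_neg_mul (m : ℕ) (hr : 0 < r) :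
    ∫ x in Set.Ioi 0, x ^ m * exp (-(r * x)) = m ! / r ^ (m + 1) := by
  have h := integral_rpow_mul_exp_neg_mul_Ioi (a := m + 1) (by positivity) hr
  rw [add_sub_cancel_right, Real.Gamma_nat_eq_factorial, ← Nat.cast_succ, Real.rpow_natCast] at h
  simpa [Real.rpow_natCast, div_pow, div_eq_inv_mul] using h

lemma toReal_exponentialPDF (hr : 0 < r) (x : ℝ) :
    (exponentialPDF r x).toReal = (Set.Ici 0).indicator (fun x => r * exp (-(r * x))) x := by
  rw [exponentialPDF_eq, ENNReal.toReal_ofReal (by split_ifs <;> positivity)]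
  rfl

lemma integral_expMeasure (hr : 0 < r) (g : ℝ → ℝ) :
    ∫ x, g x ∂expMeasure r = ∫ x in Set.Ioi 0, r * exp (-(r * x)) * g x := by
  change ∫ x, g x ∂volume.withDensity (exponentialPDF r) = _
  rw [integral_withDensity_eq_integral_toReal_smul (f := exponentialPDF r)
    (measurable_exponentialPDFReal r).ennreal_ofReal (ae_of_all _ fun _ => ENNReal.ofReal_lt_top)]
  simp_rw [toReal_exponentialPDF hr, smul_eq_mul, ← Set.indicator_mul_left]
  rw [integral_indicator measurableSet_Ici, integral_Ici_eq_integral_Ioi]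

lemma integrable_expMeasure_iff (hr : 0 < r) {g : ℝ → ℝ} :
    Integrable g (expMeasure r) ↔
      IntegrableOn (fun x => r * exp (-(r * x)) * g x) (Set.Ioi 0) := by
  change Integrable g (volume.withDensity (exponentialPDF r)) ↔ _
  rw [integrable_withDensity_iff_integrable_smul' (f := exponentialPDF r)
    (measurable_exponentialPDFReal r).ennreal_ofReal (ae_of_all _ fun _ => ENNReal.ofReal_lt_top)]
  simp_rw [toReal_exponentialPDF hr, smul_eq_mul, ← Set.indicator_mul_left]
  rw [integrable_indicator_iff measurableSet_Ici, IntegrableOn, IntegrableOn,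
    Measure.restrict_congr_set Ioi_ae_eq_Ici]

lemma integrable_pow_expMeasure (m : ℕ) (hr : 0 < r) :
    Integrable (fun x => x ^ m) (expMeasure r) := by
  rw [integrable_expMeasure_iff hr]
  simp_rw [mul_assoc r, mul_comm (exp _)]
  exact (integrableOn_pow_mul_exp_neg_mul m hr).const_mul r

lemma integral_pow_expMeasure (m : ℕ) (hr : 0 < r) :
    ∫ x, x ^ m ∂expMeasure r = m ! / r ^ m := by
  rw [integral_expMeasure hr]
  simp_rw [mul_assoc r, mul_comm (exp _)]
  rw [integral_const_mul, integral_pow_mul_exp_neg_mul m hr, pow_succ]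
  field_simp

end ExponentialMoments

lemma sub_pow_four_le (a c : ℝ) : (a - c) ^ 4 ≤ 8 * (a ^ 4 + c ^ 4) := by
  nlinarith [pow_nonneg (sq_nonneg (a + c)) 2, sq_nonneg (a ^ 2 - c ^ 2)]

lemma integral_sub_pow_four_le {α : Type*} [MeasurableSpace α] {ν : Measure α}
    [IsProbabilityMeasure ν] {f : α → ℝ} (hf : Integrable (fun x => f x ^ 4) ν) (c : ℝ) :
    ∫ x, (f x - c) ^ 4 ∂ν ≤ 8 * (∫ x, f x ^ 4 ∂ν + c ^ 4) := by
  calc ∫ x, (f x - c) ^ 4 ∂ν ≤ ∫ x, 8 * (f x ^ 4 + c ^ 4) ∂ν :=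
        integral_mono_of_nonneg (ae_of_all _ fun x => by positivity)
          ((hf.add (integrable_const _)).const_mul 8) (ae_of_all _ fun x => sub_pow_four_le _ _)
    _ = 8 * (∫ x, f x ^ 4 ∂ν + c ^ 4) := by
        rw [integral_const_mul, integral_add hf (integrable_const _), integral_const, probReal_univ,
          one_smul]

section ZeroExpMixture

noncomputable def zeroExpMixture (p q r : ℝ) : Measure ℝ :=
  ENNReal.ofReal p • Measure.dirac 0 + ENNReal.ofReal q • expMeasure r

variable {p q r : ℝ}

lemma integrable_pow_zeroExpMixture (m : ℕ) (hr : 0 < r) :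
    Integrable (fun x : ℝ => x ^ m) (zeroExpMixture p q r) :=
  ((integrable_dirac (by simp)).smul_measure ENNReal.ofReal_ne_top).add_measure
    ((integrable_pow_expMeasure m hr).smul_measure ENNReal.ofReal_ne_top)

lemma integral_pow_zeroExpMixture {m : ℕ} (hm : m ≠ 0) (hq : 0 ≤ q) (hr : 0 < r) :
    ∫ x, x ^ m ∂zeroExpMixture p q r = q * (m ! / r ^ m) := by
  rw [zeroExpMixture, integral_add_measure
    ((integrable_dirac (by simp)).smul_measure ENNReal.ofReal_ne_top)
    ((integrable_pow_expMeasure m hr).smul_measure ENNReal.ofReal_ne_top),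
    integral_smul_measure, integral_smul_measure, integral_dirac, integral_pow_expMeasure m hr,
    ENNReal.toReal_ofReal hq]
  simp [hm]

lemma centralMoment_four_le_of_map_eq_zeroExpMixture {Ω : Type*} [MeasurableSpace Ω]
    {μ : Measure Ω} [IsProbabilityMeasure μ] {X : Ω → ℝ} (hX : AEMeasurable X μ) (hq : 0 ≤ q)
    (hq1 : q ≤ 1) (hr : 0 < r) (hmap : μ.map X = zeroExpMixture p q r) :
    centralMoment X 4 μ ≤ 200 * q / r ^ 4 := by
  have : IsProbabilityMeasure (zeroExpMixture p q r) := hmap ▸ Measure.isProbabilityMeasure_map hX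
  have hmean : ∫ ω, X ω ∂μ = q / r := by
    rw [← integral_map (f := fun x => x) hX aestronglyMeasurable_id, hmap]
    simpa [div_eq_mul_inv] using integral_pow_zeroExpMixture (p := p) one_ne_zero hq hr
  have hmoment : ∫ ω, (X ω - q / r) ^ 4 ∂μ = ∫ x, (x - q / r) ^ 4 ∂zeroExpMixture p q r := by
    rw [← hmap, integral_map hX (by fun_prop)]
  have hq4 : q ^ 4 ≤ q := pow_le_of_le_one hq hq1 (by norm_num)
  calc centralMoment X 4 μ
      ≤ 8 * (∫ x, x ^ 4 ∂zeroExpMixture p q r + (q / r) ^ 4) := by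
        rw [centralMoment, hmean]
        simp only [Pi.sub_apply, Pi.pow_apply]
        rw [hmoment]
        exact integral_sub_pow_four_le (integrable_pow_zeroExpMixture 4 hr) _
    _ = 8 * (24 * q + q ^ 4) / r ^ 4 := by
        rw [integral_pow_zeroExpMixture (by norm_num) hq hr,
          show ((4 ! : ℕ) : ℝ) = 24 by norm_num [Nat.factorial]]
        field_simp
    _ ≤ 200 * q / r ^ 4 := by gcongr ?_ / _; linarith

end ZeroExpMixture

-- The probability that `Δ_i^k` is drawn from its exponential component.
noncomputable def expWeight (n i : ℕ) : ℝ := if i = 1 then 1 else 1 / ((n : ℝ) - i + 2)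

lemma expWeight_nonneg {n i : ℕ} (hin : i ≤ n) : 0 ≤ expWeight n i := by
  have : (i : ℝ) ≤ n := by exact_mod_cast hin
  unfold expWeight; split_ifs <;> positivity

lemma expWeight_le_one {n i : ℕ} (hin : i ≤ n) : expWeight n i ≤ 1 := by
  have : (i : ℝ) ≤ n := by exact_mod_cast hin
  unfold expWeight; split_ifs
  · rfl
  · rw [div_le_one (by linarith)]; linarith

lemma sum_sum_expWeight_le (n : ℕ) :
    ∑ k ∈ Icc 1 n, ∑ i ∈ Icc 1 k, expWeight n i ≤ 2 * n := by
  rw [sum_comm' (t' := Icc 1 n) (s' := fun i => Icc i n)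
    (fun k i => by simp only [mem_Icc]; omega)]
  calc ∑ i ∈ Icc 1 n, ∑ _k ∈ Icc i n, expWeight n i
      ≤ ∑ i ∈ Icc 1 n, ((if i = 1 then (n : ℝ) else 0) + 1) := by
        refine sum_le_sum fun i hi => ?_
        obtain ⟨hi1, hin⟩ := mem_Icc.1 hi
        have hin : (i : ℝ) ≤ n := by exact_mod_cast hin
        rw [sum_const, Nat.card_Icc, nsmul_eq_mul, Nat.cast_sub (by omega), expWeight]
        push_cast
        split_ifs with h
        · subst h; simp
        · rw [← mul_div_assoc, mul_one, div_le_iff₀ (by linarith)]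
          linarith
    _ ≤ 2 * n := by
        rw [sum_add_distrib, sum_ite_eq', sum_const, Nat.card_Icc, Nat.add_sub_cancel, nsmul_one]
        split_ifs <;> linarith [n.cast_nonneg (α := ℝ)]

lemma mul_sub_add_le_mul_sub_add {n k i : ℕ} (hi : 1 ≤ i) (hik : i ≤ k) :
    (n : ℝ) * (n - k + 1) ≤ (n - i + 1) * (n - k + i) := by
  have hi : (1 : ℝ) ≤ i := by exact_mod_cast hi
  have hik : (i : ℝ) ≤ k := by exact_mod_cast hik
  nlinarith

section Delta

variable {Ω : Type*} [MeasurableSpace Ω] {μ : Measure Ω} {Δ : ℕ → ℕ → ℕ → Ω → ℝ}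

lemma exists_map_eq_zeroExpMixture
    (hlaw1 : ∀ n k : ℕ, 1 ≤ k → k ≤ n →
      Measure.map (Δ n k 1) μ = expMeasure ((n : ℝ) * ((n : ℝ) - k + 1)))
    (hlaw2 : ∀ n k i : ℕ, 2 ≤ i → i ≤ k → k ≤ n →
      Measure.map (Δ n k i) μ = deltaMixtureLaw n k i)
    {n k i : ℕ} (hi : 1 ≤ i) (hik : i ≤ k) (hkn : k ≤ n) :
    ∃ p, μ.map (Δ n k i) = zeroExpMixture p (expWeight n i) ((n - i + 1) * (n - k + i)) := by
  rcases hi.eq_or_lt with rfl | hi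
  · refine ⟨0, ?_⟩
    simp [hlaw1 n k hik hkn, zeroExpMixture, expWeight]
  · refine ⟨((n : ℝ) - i + 1) / ((n : ℝ) - i + 2), (hlaw2 n k i hi hik hkn).trans ?_⟩
    simp only [deltaMixtureLaw, zeroExpMixture, expWeight, if_neg hi.ne']

lemma pow_four_mul_centralMoment_four_le [IsProbabilityMeasure μ]
    (hmeas : ∀ n k i, Measurable (Δ n k i))
    (hlaw1 : ∀ n k : ℕ, 1 ≤ k → k ≤ n →
      Measure.map (Δ n k 1) μ = expMeasure ((n : ℝ) * ((n : ℝ) - k + 1)))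
    (hlaw2 : ∀ n k i : ℕ, 2 ≤ i → i ≤ k → k ≤ n →
      Measure.map (Δ n k i) μ = deltaMixtureLaw n k i)
    {n k i : ℕ} (hi : 1 ≤ i) (hik : i ≤ k) (hkn : k ≤ n) :
    ((n : ℝ) - k + 1) ^ 4 * centralMoment (Δ n k i) 4 μ ≤
      200 / (n : ℝ) ^ 4 * expWeight n i := by
  obtain ⟨p, hp⟩ := exists_map_eq_zeroExpMixture hlaw1 hlaw2 hi hik hkn
  have hnk : (0 : ℝ) < n - k + 1 := by
    have : (k : ℝ) ≤ n := by exact_mod_cast hkn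
    linarith
  have hn : (0 : ℝ) < n := Nat.cast_pos.2 (by omega)
  have hq := expWeight_nonneg (hik.trans hkn)
  have hrate := mul_sub_add_le_mul_sub_add (n := n) hi hik
  have hmoment := centralMoment_four_le_of_map_eq_zeroExpMixture (hmeas n k i).aemeasurable hq
    (expWeight_le_one (hik.trans hkn)) ((mul_pos hn hnk).trans_le hrate) hp
  calc ((n : ℝ) - k + 1) ^ 4 * centralMoment (Δ n k i) 4 μ
      ≤ (n - k + 1) ^ 4 * (200 * expWeight n i / (n * (n - k + 1)) ^ 4) := by
        gcongr
        exact hmoment.trans (by gcongr)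
    _ = 200 / (n : ℝ) ^ 4 * expWeight n i := by
        field_simp

end Delta

theorem limit_fourth_moment_sum_eq_zero_general
    {Ω : Type*} [MeasurableSpace Ω] (μ : Measure Ω) [IsProbabilityMeasure μ]
    (Δ : ℕ → ℕ → ℕ → Ω → ℝ)
    (hmeas : ∀ n k i, Measurable (Δ n k i))
    (hlaw1 : ∀ n k : ℕ, 1 ≤ k → k ≤ n →
      Measure.map (Δ n k 1) μ = expMeasure ((n : ℝ) * ((n : ℝ) - k + 1)))
    (hlaw2 : ∀ n k i : ℕ, 2 ≤ i → i ≤ k → k ≤ n →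
      Measure.map (Δ n k i) μ = deltaMixtureLaw n k i) :
    Tendsto (fun n : ℕ => (n : ℝ) ^ 2 *
        ∑ k ∈ Icc 1 n, ∑ i ∈ Icc 1 k, ((n : ℝ) - k + 1) ^ 4 *
          ∫ ω, (Δ n k i ω - ∫ ω', Δ n k i ω' ∂μ) ^ 4 ∂μ)
      atTop (nhds 0) := by
  refine squeeze_zero' (Eventually.of_forall fun n => by positivity) ?_
    (tendsto_const_div_atTop_nhds_zero_nat 400)
  filter_upwards [eventually_ge_atTop 1] with n hn
  have hn' : (1 : ℝ) ≤ n := by exact_mod_cast hn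
  calc (n : ℝ) ^ 2 * ∑ k ∈ Icc 1 n, ∑ i ∈ Icc 1 k, ((n : ℝ) - k + 1) ^ 4 *
          ∫ ω, (Δ n k i ω - ∫ ω', Δ n k i ω' ∂μ) ^ 4 ∂μ
      ≤ (n : ℝ) ^ 2 * ∑ k ∈ Icc 1 n, ∑ i ∈ Icc 1 k, 200 / (n : ℝ) ^ 4 * expWeight n i := by
        gcongr _ * ∑ k ∈ _, ∑ i ∈ _, ?_ with k hk i hi
        exact pow_four_mul_centralMoment_four_le hmeas hlaw1 hlaw2 (mem_Icc.1 hi).1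
          (mem_Icc.1 hi).2 (mem_Icc.1 hk).2
    _ ≤ (n : ℝ) ^ 2 * (200 / (n : ℝ) ^ 4 * (2 * n)) := by
        simp_rw [← mul_sum]
        gcongr
        exact sum_sum_expWeight_le n
    _ = 400 / (n : ℝ) := by field_simp; ring

/-- with the same independent variables `Δ n k i` as before and
`μ_i^k = E[Δ_i^k]`, the scaled sum of fourth central moments
`n² ∑_{k=1}^n ∑_{i=1}^k (n-k+1)⁴ E[(Δ_i^k − μ_i^k)⁴]` tends to `0`. -/
theorem limit_fourth_moment_sum_eq_zero
    {Ω : Type*} [MeasurableSpace Ω] (μ : Measure Ω) [IsProbabilityMeasure μ]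
    (Δ : ℕ → ℕ → ℕ → Ω → ℝ)
    (hmeas : ∀ n k i, Measurable (Δ n k i))
    (hindep : ∀ n : ℕ, iIndepFun
      (fun p : {p : ℕ × ℕ // 1 ≤ p.2 ∧ p.2 ≤ p.1 ∧ p.1 ≤ n} => Δ n p.1.1 p.1.2) μ)
    (hlaw1 : ∀ n k : ℕ, 1 ≤ k → k ≤ n →
      Measure.map (Δ n k 1) μ = expMeasure ((n : ℝ) * ((n : ℝ) - k + 1)))
    (hlaw2 : ∀ n k i : ℕ, 2 ≤ i → i ≤ k → k ≤ n →
      Measure.map (Δ n k i) μ = deltaMixtureLaw n k i) :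
    Tendsto (fun n : ℕ => (n : ℝ) ^ 2 *
        ∑ k ∈ Icc 1 n, ∑ i ∈ Icc 1 k, ((n : ℝ) - k + 1) ^ 4 *
          ∫ ω, (Δ n k i ω - ∫ ω', Δ n k i ω' ∂μ) ^ 4 ∂μ)
      atTop (nhds 0) :=
  limit_fourth_moment_sum_eq_zero_general μ Δ hmeas hlaw1 hlaw2
end

section
/- With r_i^k defined by the stated recursion from the independent Δ_i^k, the increments satisfy: r_{i+1}^k − r_i^k is distributed as Exponential with rate (n-i+1)(n-k+i-1) for 1 ≤ i ≤ k, and the collection {r_2^k − r_1^k, …, r_{k+1}^k − r_k^k, r_1^{k+1} − r_{k+1}^k} consists of independent random variables. -/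
/-!
Unwinding the recursion, every increment is a sum of `Δ`'s along a diagonal of the triangle
`1 ≤ i ≤ k ≤ n`: `r_{i+1}^k − r_i^k = ∑_{j=1}^i Δ_j^{k-i+1+j}` and
`r_1^{k+1} − r_{k+1}^k = ∑_{j=1}^{k+1} Δ_j^j`. The `k + 1` diagonals involved are disjoint, which
gives the independence. On the diagonal `Δ_j^{d+j}`, `j ≥ 2`, is zero with probability
`q = (n-j+1)/(n-j+2)` and otherwise exponential of rate `q a`, where `a = (n-j+2)(n-d)` is the
rate of the partial sum up to `j - 1`; adding it keeps the sum exponential, now of rate `q a`,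
because of the characteristic function identity `a/(a-it) · (q + (1-q) qa/(qa-it)) = qa/(qa-it)`.
-/

open MeasureTheory ProbabilityTheory Finset

namespace ProbabilityTheory

open Function

variable {Ω ι J : Type*} {mΩ : MeasurableSpace Ω} {μ : Measure Ω}

lemma iIndep.iIndep_biSup {m : ι → MeasurableSpace Ω} (h_le : ∀ i, m i ≤ mΩ)
    (h : iIndep m μ) {S : J → Set ι} (hS : Pairwise (Disjoint on S)) :
    iIndep (fun j ↦ ⨆ i ∈ S j, m i) μ := by
  classical
  have := h.isProbabilityMeasure
  rw [iIndep_iff]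
  intro s
  induction s using Finset.induction_on with
  | empty => simp
  | insert a s ha ih =>
    intro f hf
    rw [Finset.set_biInter_insert, Finset.prod_insert ha,
      ← ih fun j hj ↦ hf j (mem_insert_of_mem hj)]
    have hdisj : Disjoint (S a) (⋃ j ∈ s, S j) :=
      Set.disjoint_iUnion₂_right.2 fun j hj ↦ hS fun haj ↦ ha (haj ▸ hj)
    refine (Indep_iff _ _ μ).1 (indep_iSup_of_disjoint h_le h hdisj) _ _
      (hf a (mem_insert_self a s)) (Finset.measurableSet_biInter s fun j hj ↦ ?_)
    exact (biSup_mono fun i hi ↦ Set.mem_biUnion hj hi : (⨆ i ∈ S j, m i) ≤ _) _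
      (hf j (mem_insert_of_mem hj))

variable {β : ι → Type*} {mβ : ∀ i, MeasurableSpace (β i)} {f : ∀ i, Ω → β i}

lemma measurable_biSup_comap {S : Set ι} {i : ι} (hi : i ∈ S) :
    Measurable[⨆ i ∈ S, (mβ i).comap (f i)] (f i) :=
  (comap_measurable (f i)).mono (le_iSup₂ (f := fun i (_ : i ∈ S) ↦ (mβ i).comap (f i)) i hi)
    le_rfl

lemma iIndepFun.iIndepFun_of_measurable_biSup (hf : ∀ i, Measurable (f i))
    (h : iIndepFun f μ) {S : J → Set ι} (hS : Pairwise (Disjoint on S))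
    {γ : J → Type*} {mγ : ∀ j, MeasurableSpace (γ j)} {g : ∀ j, Ω → γ j}
    (hg : ∀ j, Measurable[⨆ i ∈ S j, (mβ i).comap (f i)] (g j)) :
    iIndepFun g μ := by
  rw [iIndepFun_iff_iIndep] at h ⊢
  exact iIndep_of_iIndep_of_le (h.iIndep_biSup (fun i ↦ (hf i).comap_le) hS)
    fun j ↦ (hg j).comap_le

lemma iIndepFun.indepFun_of_measurable_biSup (hf : ∀ i, Measurable (f i))
    (h : iIndepFun f μ) {S T : Set ι} (hST : Disjoint S T)
    {γ δ : Type*} {mγ : MeasurableSpace γ} {mδ : MeasurableSpace δ} {X : Ω → γ} {Y : Ω → δ}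
    (hX : Measurable[⨆ i ∈ S, (mβ i).comap (f i)] X)
    (hY : Measurable[⨆ i ∈ T, (mβ i).comap (f i)] Y) :
    IndepFun X Y μ := by
  rw [iIndepFun_iff_iIndep] at h
  rw [IndepFun_iff_Indep]
  exact indep_of_indep_of_le (indep_iSup_of_disjoint (fun i ↦ (hf i).comap_le) h hST)
    hX.comap_le hY.comap_le

section CharFun

open Complex

variable {E : Type*} [SeminormedAddCommGroup E] [InnerProductSpace ℝ E] {mE : MeasurableSpace E}

lemma charFun_add_measure [OpensMeasurableSpace E] {μ ν : Measure E} [IsFiniteMeasure μ]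
    [IsFiniteMeasure ν] (t : E) :
    charFun (μ + ν) t = charFun μ t + charFun ν t := by
  simp only [charFun_apply]
  exact integral_add_measure ((integrable_const (1 : ℝ)).mono (by fun_prop) (by simp))
    ((integrable_const (1 : ℝ)).mono (by fun_prop) (by simp))

lemma charFun_smul_measure (μ : Measure E) (c : ENNReal) (t : E) :
    charFun (c • μ) t = c.toReal * charFun μ t := by
  simp only [charFun_apply, integral_smul_measure, Complex.real_smul]

lemma charFun_expMeasure {r : ℝ} (hr : 0 < r) (t : ℝ) :
    charFun (expMeasure r) t = r / (r - t * I) := by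
  have hpdf : Measurable (exponentialPDF r) :=
    (measurable_exponentialPDFReal r).ennreal_ofReal
  have hexp : expMeasure r = volume.withDensity (exponentialPDF r) := rfl
  have hintegrand : ∀ x : ℝ, (exponentialPDF r x).toReal • cexp (t * x * I)
      = Set.indicator (Set.Ici 0) (fun x : ℝ ↦ r * cexp ((-r + t * I) * x)) x := by
    intro x
    rw [exponentialPDF_eq]
    by_cases hx : 0 ≤ x
    · rw [if_pos hx, Set.indicator_of_mem (Set.mem_Ici.2 hx),
        ENNReal.toReal_ofReal (by positivity), Complex.real_smul]
      push_cast
      rw [mul_assoc, ← Complex.exp_add]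
      congr 2
      ring
    · rw [if_neg hx, Set.indicator_of_notMem (mt Set.mem_Ici.1 hx)]
      simp
  rw [charFun_apply_real, hexp, integral_withDensity_eq_integral_toReal_smul hpdf
    (ae_of_all _ fun _ ↦ ENNReal.ofReal_lt_top)]
  simp_rw [hintegrand]
  rw [integral_indicator measurableSet_Ici, integral_Ici_eq_integral_Ioi, integral_const_mul,
    integral_exp_mul_complex_Ioi (by simpa using hr) 0]
  have hne : (r : ℂ) - t * I ≠ 0 := fun h ↦ by
    simpa [hr.ne'] using congrArg Complex.re h
  rw [show -(r : ℂ) + t * I = -(r - t * I) by ring]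
  field_simp
  simp

lemma expMeasure_conv_mixture {a q : ℝ} (ha : 0 < a) (hq0 : 0 < q) (hq1 : q ≤ 1) :
    expMeasure a ∗ (ENNReal.ofReal q • Measure.dirac 0 +
      ENNReal.ofReal (1 - q) • expMeasure (q * a)) = expMeasure (q * a) := by
  have hqa : 0 < q * a := mul_pos hq0 ha
  have := isProbabilityMeasure_expMeasure ha
  have := isProbabilityMeasure_expMeasure hqa
  have := Measure.smul_finite (Measure.dirac (0 : ℝ)) (ENNReal.ofReal_ne_top (r := q))
  have := Measure.smul_finite (expMeasure (q * a)) (ENNReal.ofReal_ne_top (r := 1 - q))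
  refine Measure.ext_of_charFun (funext fun t ↦ ?_)
  rw [charFun_conv, charFun_add_measure, charFun_smul_measure, charFun_smul_measure,
    charFun_dirac, charFun_expMeasure ha, charFun_expMeasure hqa,
    ENNReal.toReal_ofReal hq0.le, ENNReal.toReal_ofReal (sub_nonneg.2 hq1), inner_zero_left,
    Complex.ofReal_zero, zero_mul, Complex.exp_zero]
  have hne : ∀ {b : ℝ}, 0 < b → (b : ℂ) - t * I ≠ 0 := fun hb h ↦ by
    simpa [hb.ne'] using congrArg Complex.re h
  have h1 := hne ha
  have h2 := hne hqa
  push_cast at h2 ⊢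
  rw [mul_comm (q : ℂ) a] at h2 ⊢
  field_simp
  ring

end CharFun

end ProbabilityTheory

abbrev DeltaIndex (n : ℕ) := {p : ℕ × ℕ // 1 ≤ p.2 ∧ p.2 ≤ p.1 ∧ p.1 ≤ n}

/-- `diagSum Δ d m` is `∑_{j=1}^m Δ_j^{d+j}`, a sum along a diagonal of the triangle of `Δ`'s. -/
def diagSum {Ω : Type*} (Δ : ℕ → ℕ → Ω → ℝ) (d m : ℕ) (ω : Ω) : ℝ :=
  ∑ j ∈ Icc 1 m, Δ (d + j) j ω

section DiagSum

variable {Ω : Type*} (Δ : ℕ → ℕ → Ω → ℝ)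

lemma diagSum_one (d : ℕ) : diagSum Δ d 1 = Δ (d + 1) 1 := by
  funext ω
  simp [diagSum]

lemma diagSum_succ (d m : ℕ) (ω : Ω) :
    diagSum Δ d (m + 1) ω = diagSum Δ d m ω + Δ (d + (m + 1)) (m + 1) ω :=
  sum_Icc_succ_top (by omega) _

lemma measurable_diagSum {n d m : ℕ} [MeasurableSpace Ω] (hdm : d + m ≤ n)
    {S : Set (DeltaIndex n)} (hS : ∀ p : DeltaIndex n, p.1.1 = d + p.1.2 → p.1.2 ≤ m → p ∈ S) :
    Measurable[⨆ p ∈ S, MeasurableSpace.comap (Δ p.1.1 p.1.2) inferInstance]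
      (diagSum Δ d m) := by
  refine Finset.measurable_sum _ fun j hj ↦ ?_
  have hj := mem_Icc.1 hj
  exact measurable_biSup_comap (f := fun p : DeltaIndex n ↦ Δ p.1.1 p.1.2)
    (hS ⟨(d + j, j), by omega⟩ rfl hj.2)

end DiagSum

section Recursion

variable {Ω : Type*} {n : ℕ} {Δ r : ℕ → ℕ → Ω → ℝ}

lemma r_sub_eq_diagSum (hA : ∀ k, 1 ≤ k → k ≤ n - 1 → ∀ ω, r k 2 ω - r k 1 ω = Δ (k + 1) 1 ω)
    (hC : ∀ k i, 2 ≤ i → i ≤ k → k ≤ n - 1 → ∀ ω,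
      r k (i + 1) ω - r k i ω = r (k - 1) i ω - r (k - 1) (i - 1) ω + Δ (k + 1) i ω)
    {i : ℕ} (hi : 1 ≤ i) :
    ∀ {k}, i ≤ k → k ≤ n - 1 → ∀ ω, r k (i + 1) ω - r k i ω = diagSum Δ (k + 1 - i) i ω := by
  induction i, hi using Nat.le_induction with
  | base =>
    intro k hk hkn ω
    rw [hA k hk hkn ω, diagSum_one, Nat.add_sub_cancel]
  | succ i hi ih =>
    intro k hik hkn ω
    rw [hC k (i + 1) (by omega) hik hkn ω, Nat.add_sub_cancel, ih (by omega) (by omega) ω,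
      diagSum_succ, show k - 1 + 1 - i = k + 1 - (i + 1) by omega,
      show k + 1 - (i + 1) + (i + 1) = k + 1 by omega]

lemma r_succ_one_sub_eq_diagSum (hinit : r 1 1 = Δ 1 1)
    (hB : ∀ ω, r 2 1 ω - r 1 2 ω = r 1 1 ω + Δ 2 2 ω)
    (hD : ∀ k, 2 ≤ k → k ≤ n - 1 → ∀ ω,
      r (k + 1) 1 ω - r k (k + 1) ω = r k 1 ω - r (k - 1) k ω + Δ (k + 1) (k + 1) ω)
    {k : ℕ} (hk : 1 ≤ k) :
    k ≤ n - 1 → ∀ ω, r (k + 1) 1 ω - r k (k + 1) ω = diagSum Δ 0 (k + 1) ω := by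
  induction k, hk using Nat.le_induction with
  | base =>
    intro _ ω
    rw [hB ω, hinit, diagSum_succ, diagSum_one]
  | succ k hk ih =>
    intro hkn ω
    rw [hD (k + 1) (by omega) hkn ω, Nat.add_sub_cancel, ih (by omega) ω, diagSum_succ Δ 0 (k + 1),
      zero_add]

end Recursion

lemma deltaMixtureLaw_succ {n k i : ℕ} (hi : i < n) :
    deltaMixtureLaw n k (i + 1) =
      ENNReal.ofReal (((n : ℝ) - i) / ((n : ℝ) - i + 1)) • Measure.dirac 0 +
        ENNReal.ofReal (1 - ((n : ℝ) - i) / ((n : ℝ) - i + 1)) •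
          expMeasure (((n : ℝ) - i) / ((n : ℝ) - i + 1) *
            (((n : ℝ) - i + 1) * ((n : ℝ) - k + i + 1))) := by
  have : (i : ℝ) < n := by exact_mod_cast hi
  have : (n : ℝ) - i + 1 ≠ 0 := by linarith
  rw [deltaMixtureLaw, Nat.cast_add_one, show (n : ℝ) - (i + 1) + 1 = n - i by ring,
    show (n : ℝ) - (i + 1) + 2 = n - i + 1 by ring]
  congr 3 <;> field_simp <;> ring

section Law

variable {Ω : Type*} [MeasurableSpace Ω] {μ : Measure Ω} {n : ℕ} {Δ : ℕ → ℕ → Ω → ℝ}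

lemma map_diagSum (hmeas : ∀ k i, Measurable (Δ k i))
    (hindep : iIndepFun (fun p : DeltaIndex n ↦ Δ p.1.1 p.1.2) μ)
    (hlaw1 : ∀ k : ℕ, 1 ≤ k → k ≤ n →
      Measure.map (Δ k 1) μ = expMeasure ((n : ℝ) * ((n : ℝ) - k + 1)))
    (hlaw2 : ∀ k i : ℕ, 2 ≤ i → i ≤ k → k ≤ n →
      Measure.map (Δ k i) μ = deltaMixtureLaw n k i)
    {d m : ℕ} (hm : 1 ≤ m) :
    d + m ≤ n → μ.map (diagSum Δ d m) = expMeasure (((n : ℝ) - m + 1) * ((n : ℝ) - d)) := by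
  induction m, hm using Nat.le_induction with
  | base =>
    intro hdn
    rw [diagSum_one, hlaw1 (d + 1) (by omega) hdn]
    congr 1
    push_cast
    ring
  | succ m hm ih =>
    intro hdm
    have := hindep.isProbabilityMeasure
    have hnm : (m : ℝ) < n := by exact_mod_cast (by omega : m < n)
    have hdn : (d : ℝ) < n := by exact_mod_cast (by omega : d < n)
    have hX := ih (by omega)
    have hZ := hlaw2 (d + (m + 1)) (m + 1) (by omega) (by omega) hdm
    rw [deltaMixtureLaw_succ (by omega),
      show (n : ℝ) - ↑(d + (m + 1)) + m + 1 = n - d by push_cast; ring] at hZ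
    have hXZ : IndepFun (diagSum Δ d m) (Δ (d + (m + 1)) (m + 1)) μ :=
      hindep.indepFun_of_measurable_biSup (fun _ ↦ hmeas _ _)
        (S := {p | p.1.2 ≤ m}) (T := {p | m < p.1.2})
        (Set.disjoint_left.2 fun _ (hp : _ ≤ m) (hp' : m < _) ↦ (not_lt.2 hp) hp')
        (measurable_diagSum Δ (by omega) fun _ _ h ↦ h)
        (measurable_biSup_comap (f := fun p : DeltaIndex n ↦ Δ p.1.1 p.1.2)
          (i := ⟨(d + (m + 1), m + 1), by omega⟩) (Nat.lt_succ_self m))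
    have hmeasX : Measurable (diagSum Δ d m) := Finset.measurable_sum _ fun _ _ ↦ hmeas _ _
    rw [funext (diagSum_succ Δ d m), ← Pi.add_def, hXZ.map_add_eq_map_conv_map hmeasX (hmeas _ _),
      hX, hZ, expMeasure_conv_mixture (by nlinarith) (div_pos (by linarith) (by linarith))
        (div_le_one_of_le₀ (by linarith) (by linarith))]
    congr 1
    have : (n : ℝ) - m + 1 ≠ 0 := by linarith
    field_simp
    push_cast
    ring

lemma iIndepFun_diagSum (hmeas : ∀ k i, Measurable (Δ k i))
    (hindep : iIndepFun (fun p : DeltaIndex n ↦ Δ p.1.1 p.1.2) μ) {k : ℕ} (hk : k + 1 ≤ n) :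
    iIndepFun (fun j : Fin (k + 1) ↦ diagSum Δ (k - j) (j + 1)) μ := by
  refine hindep.iIndepFun_of_measurable_biSup (fun _ ↦ hmeas _ _)
    (S := fun j : Fin (k + 1) ↦ {p | p.1.1 = k - j + p.1.2}) ?_
    fun j ↦ measurable_diagSum Δ (by omega) fun _ hp _ ↦ hp
  intro j j' hjj'
  refine Set.disjoint_left.2 fun p (hp : _ = _) (hp' : _ = _) ↦ hjj' (Fin.ext ?_)
  omega

end Law

theorem r_increments_law_and_independence_general
    {Ω : Type*} [MeasurableSpace Ω] (μ : Measure Ω) (n : ℕ)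
    (Δ : ℕ → ℕ → Ω → ℝ) (r : ℕ → ℕ → Ω → ℝ)
    (hmeas : ∀ k i, Measurable (Δ k i))
    (hindep : iIndepFun
      (fun p : {p : ℕ × ℕ // 1 ≤ p.2 ∧ p.2 ≤ p.1 ∧ p.1 ≤ n} => Δ p.1.1 p.1.2) μ)
    (hlaw1 : ∀ k : ℕ, 1 ≤ k → k ≤ n →
      Measure.map (Δ k 1) μ = expMeasure ((n : ℝ) * ((n : ℝ) - k + 1)))
    (hlaw2 : ∀ k i : ℕ, 2 ≤ i → i ≤ k → k ≤ n →
      Measure.map (Δ k i) μ = deltaMixtureLaw n k i)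
    (hinit : r 1 1 = Δ 1 1)
    (hA : ∀ k, 1 ≤ k → k ≤ n - 1 → ∀ ω, r k 2 ω - r k 1 ω = Δ (k + 1) 1 ω)
    (hB : ∀ ω, r 2 1 ω - r 1 2 ω = r 1 1 ω + Δ 2 2 ω)
    (hC : ∀ k i, 2 ≤ i → i ≤ k → k ≤ n - 1 → ∀ ω,
      r k (i + 1) ω - r k i ω = r (k - 1) i ω - r (k - 1) (i - 1) ω + Δ (k + 1) i ω)
    (hD : ∀ k, 2 ≤ k → k ≤ n - 1 → ∀ ω,
      r (k + 1) 1 ω - r k (k + 1) ω = r k 1 ω - r (k - 1) k ω + Δ (k + 1) (k + 1) ω) :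
    ∀ k, 1 ≤ k → k ≤ n - 1 →
      (∀ i, 1 ≤ i → i ≤ k →
        Measure.map (fun ω => r k (i + 1) ω - r k i ω) μ =
          expMeasure ((((n : ℝ) - i + 1)) * (((n : ℝ) - k + i - 1)))) ∧
      iIndepFun
        (fun j : Fin (k + 1) => fun ω =>
          if (j : ℕ) < k then r k ((j : ℕ) + 2) ω - r k ((j : ℕ) + 1) ω
          else r (k + 1) 1 ω - r k (k + 1) ω) μ := by
  intro k hk hkn
  have hsub : ∀ i, 1 ≤ i → i ≤ k →
      (fun ω ↦ r k (i + 1) ω - r k i ω) = diagSum Δ (k + 1 - i) i :=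
    fun i hi hik ↦ funext (r_sub_eq_diagSum hA hC hi hik hkn)
  refine ⟨fun i hi hik ↦ ?_, ?_⟩
  · rw [hsub i hi hik, map_diagSum hmeas hindep hlaw1 hlaw2 hi (by omega)]
    congr 1
    push_cast [Nat.cast_sub (by omega : i ≤ k + 1)]
    ring
  · convert iIndepFun_diagSum hmeas hindep (by omega : k + 1 ≤ n) using 1
    funext j ω
    split_ifs with hj
    · rw [show k - j = k + 1 - (j + 1) by omega]
      exact r_sub_eq_diagSum hA hC (by omega) (by omega) hkn ω
    · rw [show (j : ℕ) = k by omega, Nat.sub_self]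
      exact r_succ_one_sub_eq_diagSum hinit hB hD hk hkn ω

/-- with `r k i` (denoting `r_i^k`) defined by the stated recursion from the
independent variables `Δ k i` (denoting `Δ_i^k`), the increment `r_{i+1}^k − r_i^k` is
exponential with rate `(n-i+1)(n-k+i-1)` for `1 ≤ i ≤ k`, and the variables
`r_2^k − r_1^k, …, r_{k+1}^k − r_k^k, r_1^{k+1} − r_{k+1}^k` are independent. -/
theorem r_increments_law_and_independence
    {Ω : Type*} [MeasurableSpace Ω] (μ : Measure Ω) [IsProbabilityMeasure μ] (n : ℕ)
    (Δ : ℕ → ℕ → Ω → ℝ) (r : ℕ → ℕ → Ω → ℝ)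
    (hmeas : ∀ k i, Measurable (Δ k i)) (hrmeas : ∀ k i, Measurable (r k i))
    (hindep : iIndepFun
      (fun p : {p : ℕ × ℕ // 1 ≤ p.2 ∧ p.2 ≤ p.1 ∧ p.1 ≤ n} => Δ p.1.1 p.1.2) μ)
    (hlaw1 : ∀ k : ℕ, 1 ≤ k → k ≤ n →
      Measure.map (Δ k 1) μ = expMeasure ((n : ℝ) * ((n : ℝ) - k + 1)))
    (hlaw2 : ∀ k i : ℕ, 2 ≤ i → i ≤ k → k ≤ n →
      Measure.map (Δ k i) μ = deltaMixtureLaw n k i)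
    (hinit : r 1 1 = Δ 1 1)
    (hA : ∀ k, 1 ≤ k → k ≤ n - 1 → ∀ ω, r k 2 ω - r k 1 ω = Δ (k + 1) 1 ω)
    (hB : ∀ ω, r 2 1 ω - r 1 2 ω = r 1 1 ω + Δ 2 2 ω)
    (hC : ∀ k i, 2 ≤ i → i ≤ k → k ≤ n - 1 → ∀ ω,
      r k (i + 1) ω - r k i ω = r (k - 1) i ω - r (k - 1) (i - 1) ω + Δ (k + 1) i ω)
    (hD : ∀ k, 2 ≤ k → k ≤ n - 1 → ∀ ω,
      r (k + 1) 1 ω - r k (k + 1) ω = r k 1 ω - r (k - 1) k ω + Δ (k + 1) (k + 1) ω) :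
    ∀ k, 1 ≤ k → k ≤ n - 1 →
      (∀ i, 1 ≤ i → i ≤ k →
        Measure.map (fun ω => r k (i + 1) ω - r k i ω) μ =
          expMeasure ((((n : ℝ) - i + 1)) * (((n : ℝ) - k + i - 1)))) ∧
      iIndepFun
        (fun j : Fin (k + 1) => fun ω =>
          if (j : ℕ) < k then r k ((j : ℕ) + 2) ω - r k ((j : ℕ) + 1) ω
          else r (k + 1) 1 ω - r k (k + 1) ω) μ :=
  r_increments_law_and_independence_general μ n Δ r hmeas hindep hlaw1 hlaw2 hinit hA hB hC hD
end
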